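/- Let p ∈ (0,∞] (with 𝕜 = ℝ or ℂ), let F be a closed 𝕜-subspace of ℓ_p with c₀ ⊆ F, and let α be a cardinal with ℵ₀ ≤ α ≤ 𝔠. Then F \ Z(F) is not (α,𝔠)-spaceable: there exists a subspace V ⊆ F with dim V = α, all of whose elements have infinitely many zero coordinates, such that no closed subspace W satisfies V ⊆ W ⊆ F, dim W = 𝔠, and every element of W has infinitely many zero coordinates. -/

import Mathlib

/-!
Split the coordinates into even and odd ones, and the odd ones into infinitely many infinite
blocks. Let `V` be spanned by the restrictions of the odd-supported sequence `4⁻¹ ^ n` to the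
blocks, together with `α` independent even-supported sequences `t ^ (n / 2)`, `0 < t < 1`.
An element of `V` involves only finitely many blocks, so it vanishes at one point of every
other block. But the block pieces sum, in every `ℓ_p`, to the whole odd-supported sequence,
so every closed `W ⊇ V` contains it; adding one even-supported generator gives an element
of `W` without zeros.
-/

open Filter
open scoped ENNReal

/-- Membership in `ℓ_p` for `p ∈ (0,∞]`: for `p = ∞` boundedness, for
`p < ∞` summability of `‖x n‖^p`. -/
def InLp {𝕜 : Type} [RCLike 𝕜] (p : ℝ≥0∞) (x : ℕ → 𝕜) : Prop :=
  if p = ⊤ then ∃ C : ℝ, ∀ n, ‖x n‖ ≤ C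
  else Summable (fun n => ‖x n‖ ^ p.toReal)

/-- The `p`-distance on `ℓ_p`. -/
noncomputable def dp {𝕜 : Type} [RCLike 𝕜] (p : ℝ≥0∞) (x y : ℕ → 𝕜) : ℝ :=
  if p = ⊤ then ⨆ n, ‖x n - y n‖
  else if p < 1 then ∑' n, ‖x n - y n‖ ^ p.toReal
  else (∑' n, ‖x n - y n‖ ^ p.toReal) ^ (1 / p.toReal)

/-- A set of sequences is closed in `ℓ_p` if it contains every `ℓ_p`-limit
(in the `p`-distance) of sequences of its elements. -/
def IsClosedInLp {𝕜 : Type} [RCLike 𝕜] (p : ℝ≥0∞) (F : Set (ℕ → 𝕜)) : Prop :=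
  ∀ f : ℕ → (ℕ → 𝕜), (∀ j, f j ∈ F) → ∀ x : ℕ → 𝕜, InLp p x →
    Tendsto (fun j => dp p (f j) x) atTop (nhds 0) → x ∈ F

open Function Submodule

section LpEstimates

variable {𝕜 : Type} [RCLike 𝕜] {ρ : ℝ}

lemma norm_rpow_le_geometric {a : 𝕜} {C q : ℝ} {n : ℕ} (hC : 0 ≤ C) (hq : 0 ≤ q) (hρ : 0 ≤ ρ)
    (ha : ‖a‖ ≤ C * ρ ^ n) : ‖a‖ ^ q ≤ C ^ q * (ρ ^ q) ^ n :=
  calc ‖a‖ ^ q ≤ (C * ρ ^ n) ^ q := Real.rpow_le_rpow (norm_nonneg _) ha hq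
    _ = C ^ q * (ρ ^ q) ^ n := by rw [Real.mul_rpow hC (pow_nonneg hρ n), Real.rpow_pow_comm hρ]

lemma inLp_of_norm_le_geometric {p : ℝ≥0∞} (hp : 0 < p) {x : ℕ → 𝕜} {C : ℝ} (hC : 0 ≤ C)
    (hρ0 : 0 ≤ ρ) (hρ1 : ρ < 1) (hx : ∀ n, ‖x n‖ ≤ C * ρ ^ n) : InLp p x := by
  unfold InLp
  split_ifs with hpt
  · exact ⟨C, fun n => (hx n).trans (mul_le_of_le_one_right hC (pow_le_one₀ hρ0 hρ1.le))⟩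
  · have hq : 0 < p.toReal := ENNReal.toReal_pos hp.ne' hpt
    exact .of_nonneg_of_le (fun n => by positivity)
      (fun n => norm_rpow_le_geometric hC hq.le hρ0 (hx n))
      ((summable_geometric_of_lt_one (by positivity) (Real.rpow_lt_one hρ0 hρ1 hq)).mul_left _)

lemma tendsto_dp_of_norm_sub_le {p : ℝ≥0∞} (hp : 0 < p) {f : ℕ → ℕ → 𝕜} {x : ℕ → 𝕜}
    {c : ℕ → ℝ} (hc : Tendsto c atTop (nhds 0)) (hρ0 : 0 ≤ ρ) (hρ1 : ρ < 1)
    (h : ∀ J n, ‖f J n - x n‖ ≤ c J * ρ ^ n) :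
    Tendsto (fun J => dp p (f J) x) atTop (nhds 0) := by
  have hc0 : ∀ J, 0 ≤ c J := fun J => by simpa using (norm_nonneg _).trans (h J 0)
  rcases eq_or_ne p ⊤ with rfl | hpt
  · simp only [dp]
    refine squeeze_zero (fun J => Real.iSup_nonneg fun n => norm_nonneg _) (fun J => ?_) hc
    exact ciSup_le fun n =>
      (h J n).trans (mul_le_of_le_one_right (hc0 J) (pow_le_one₀ hρ0 hρ1.le))
  have hq : 0 < p.toReal := ENNReal.toReal_pos hp.ne' hpt
  have hgeo : Summable fun n : ℕ => (ρ ^ p.toReal) ^ n :=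
    summable_geometric_of_lt_one (by positivity) (Real.rpow_lt_one hρ0 hρ1 hq)
  have hsum : Tendsto (fun J => ∑' n, ‖f J n - x n‖ ^ p.toReal) atTop (nhds 0) := by
    have hbound := fun J n => norm_rpow_le_geometric (hc0 J) hq.le hρ0 (h J n)
    refine squeeze_zero (fun J => tsum_nonneg fun n => by positivity) (fun J => ?_)
      (by simpa [Real.zero_rpow hq.ne'] using
        (hc.rpow_const (Or.inr hq.le)).mul_const (∑' n : ℕ, (ρ ^ p.toReal) ^ n))
    rw [← tsum_mul_left]
    exact Summable.tsum_le_tsum (hbound J)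
      (.of_nonneg_of_le (fun n => by positivity) (hbound J) (hgeo.mul_left _)) (hgeo.mul_left _)
  simp only [dp, if_neg hpt]
  split_ifs
  · exact hsum
  · have hroot := hsum.rpow_const (Or.inr (by positivity : (0 : ℝ) ≤ 1 / p.toReal))
    rwa [Real.zero_rpow (by positivity)] at hroot

end LpEstimates

lemma linearIndependent_geometric {R ι : Type*} [CommRing R] [IsDomain R] {r : ι → R}
    (hr : Injective r) : LinearIndependent R fun i (m : ℕ) => r i ^ m :=
  (linearIndependent_monoidHom (Multiplicative ℕ) R).comp (fun i => powersHom R (r i))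
    ((powersHom R).injective.comp hr)

lemma Submodule.disjoint_pi_bot_compl {ι R M : Type*} [Semiring R] [AddCommMonoid M] [Module R M]
    (s : Set ι) :
    Disjoint (Submodule.pi s fun _ => (⊥ : Submodule R M)) (Submodule.pi sᶜ fun _ => ⊥) := by
  rw [Submodule.disjoint_def]
  intro x hx hx'
  funext i
  by_cases hi : i ∈ s
  · simpa using hx i hi
  · simpa using hx' i hi

section ZerosAlong

variable {R ι : Type*} [Semiring R]

def eventuallyZeroAlong (φ : ι → ℕ) : Submodule R (ℕ → R) where
  carrier := {x | ∀ᶠ j in cofinite, x (φ j) = 0}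
  add_mem' {x y} (hx : ∀ᶠ j in cofinite, x (φ j) = 0) (hy : ∀ᶠ j in cofinite, y (φ j) = 0) :=
    (hx.and hy).mono fun j h => by simp [h.1, h.2]
  zero_mem' := (Eventually.of_forall fun _ => rfl : ∀ᶠ j in cofinite, (0 : ℕ → R) (φ j) = 0)
  smul_mem' c x (hx : ∀ᶠ j in cofinite, x (φ j) = 0) := hx.mono fun j h => by simp [h]

lemma mem_eventuallyZeroAlong {φ : ι → ℕ} {x : ℕ → R} :
    x ∈ eventuallyZeroAlong φ ↔ ∀ᶠ j in cofinite, x (φ j) = 0 :=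
  Iff.rfl

lemma infinite_setOf_eq_zero_of_mem_eventuallyZeroAlong [Infinite ι] {φ : ι → ℕ}
    (hφ : Injective φ) {x : ℕ → R} (hx : x ∈ eventuallyZeroAlong φ) :
    {n | x n = 0}.Infinite :=
  ((frequently_cofinite_iff_infinite.mp (mem_eventuallyZeroAlong.mp hx).frequently).image
    hφ.injOn).mono (by rintro _ ⟨j, hj, rfl⟩; exact hj)

end ZerosAlong

section Construction

variable {𝕜 : Type} [RCLike 𝕜]

/- The odd coordinate `2 * m + 1` lies in block `m.unpair.1`; each block is infinite, and
`blockPoint j` is a point of block `j`. -/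
def oddBlock (n : ℕ) : ℕ := (n / 2).unpair.1

def blockPoint (j : ℕ) : ℕ := 2 * Nat.pair j 0 + 1

lemma oddBlock_blockPoint (j : ℕ) : oddBlock (blockPoint j) = j := by
  rw [oddBlock, blockPoint, Nat.mul_add_div two_pos, Nat.div_eq_of_lt one_lt_two, add_zero,
    Nat.unpair_pair]

lemma odd_blockPoint (j : ℕ) : Odd (blockPoint j) := odd_two_mul_add_one _

lemma blockPoint_injective : Injective blockPoint := LeftInverse.injective oddBlock_blockPoint

lemma oddBlock_le (n : ℕ) : oddBlock n ≤ n := (Nat.unpair_left_le _).trans (Nat.div_le_self _ _)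

noncomputable def oddGeom (n : ℕ) : 𝕜 := if Odd n then (4⁻¹ : 𝕜) ^ n else 0

noncomputable def oddGeomBlock (k n : ℕ) : 𝕜 := if oddBlock n = k then oddGeom n else 0

noncomputable def evenPow (t : 𝕜) (n : ℕ) : 𝕜 := if Even n then t ^ (n / 2) else 0

lemma norm_oddGeom_le (n : ℕ) : ‖(oddGeom n : 𝕜)‖ ≤ 4⁻¹ ^ n := by
  unfold oddGeom
  split_ifs <;> simp

lemma norm_oddGeomBlock_le (k n : ℕ) : ‖(oddGeomBlock k n : 𝕜)‖ ≤ 4⁻¹ ^ n := by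
  unfold oddGeomBlock
  split_ifs
  exacts [norm_oddGeom_le n, by simp]

lemma oddGeom_ne_zero {n : ℕ} (hn : Odd n) : (oddGeom n : 𝕜) ≠ 0 := by
  simp [oddGeom, hn]

lemma sum_oddGeomBlock_apply (J n : ℕ) :
    (∑ k ∈ Finset.range J, oddGeomBlock k : ℕ → 𝕜) n =
      if oddBlock n < J then oddGeom n else 0 := by
  simp [Finset.sum_apply, oddGeomBlock]

lemma norm_sum_oddGeomBlock_sub_le (J n : ℕ) :
    ‖(∑ k ∈ Finset.range J, oddGeomBlock k : ℕ → 𝕜) n - oddGeom n‖ ≤ 2⁻¹ ^ J * 2⁻¹ ^ n := by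
  rw [sum_oddGeomBlock_apply]
  split_ifs with h
  · simp only [sub_self, norm_zero]
    positivity
  · have hJn : J ≤ n := (not_lt.mp h).trans (oddBlock_le n)
    calc ‖0 - (oddGeom n : 𝕜)‖ ≤ 4⁻¹ ^ n := by simpa using norm_oddGeom_le n
      _ = 2⁻¹ ^ n * 2⁻¹ ^ n := by rw [← mul_pow]; norm_num
      _ ≤ 2⁻¹ ^ J * 2⁻¹ ^ n :=
        mul_le_mul_of_nonneg_right (pow_le_pow_of_le_one (by norm_num) (by norm_num) hJn)
          (by positivity)

lemma oddGeom_mem_of_isClosedInLp {p : ℝ≥0∞} (hp : 0 < p) {W : Submodule 𝕜 (ℕ → 𝕜)}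
    (hW : IsClosedInLp p (W : Set (ℕ → 𝕜))) (hblock : ∀ k, oddGeomBlock k ∈ W) : oddGeom ∈ W :=
  hW _ (fun J => W.sum_mem fun k _ => hblock k) _
    (inLp_of_norm_le_geometric (ρ := 4⁻¹) hp zero_le_one (by norm_num) (by norm_num)
      fun n => (norm_oddGeom_le n).trans_eq (one_mul _).symm)
    (tendsto_dp_of_norm_sub_le hp
      (tendsto_pow_atTop_nhds_zero_of_lt_one (by norm_num) (by norm_num)) (by norm_num)
      (by norm_num) norm_sum_oddGeomBlock_sub_le)

lemma funLeft_blockPoint_oddGeomBlock (k : ℕ) :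
    LinearMap.funLeft 𝕜 𝕜 blockPoint (oddGeomBlock k) = Pi.single k (oddGeom (blockPoint k)) := by
  funext j
  by_cases hj : j = k <;> simp [LinearMap.funLeft_apply, oddGeomBlock, oddBlock_blockPoint, hj]

lemma linearIndependent_oddGeomBlock : LinearIndependent 𝕜 (oddGeomBlock : ℕ → ℕ → 𝕜) :=
  .of_comp (LinearMap.funLeft 𝕜 𝕜 blockPoint) <| by
    simpa only [comp_def, funLeft_blockPoint_oddGeomBlock] using
      Pi.linearIndependent_single_of_ne_zero fun k => oddGeom_ne_zero (odd_blockPoint k)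

lemma linearIndependent_evenPow {ι : Type*} {r : ι → 𝕜} (hr : Injective r) :
    LinearIndependent 𝕜 fun i => evenPow (r i) :=
  .of_comp (LinearMap.funLeft 𝕜 𝕜 (2 * ·)) <| by
    have hcomp :
        LinearMap.funLeft 𝕜 𝕜 (2 * ·) ∘ (fun i => evenPow (r i)) = fun i m => r i ^ m := by
      funext i m
      simp [LinearMap.funLeft_apply, evenPow]
    exact hcomp ▸ linearIndependent_geometric hr

lemma oddGeomBlock_mem_pi_bot (k : ℕ) :
    oddGeomBlock k ∈ Submodule.pi {n | Odd n}ᶜ fun _ => (⊥ : Submodule 𝕜 𝕜) := by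
  intro n hn
  simp_all [oddGeomBlock, oddGeom]

lemma evenPow_mem_pi_bot (t : 𝕜) :
    evenPow t ∈ Submodule.pi {n | Odd n} fun _ => (⊥ : Submodule 𝕜 𝕜) := by
  intro n hn
  simp_all [evenPow, Nat.not_even_iff_odd]

variable {ι : Type*} {r : ι → 𝕜}

lemma linearIndependent_sumElim_oddGeomBlock_evenPow (hr : Injective r) :
    LinearIndependent 𝕜 (Sum.elim oddGeomBlock fun i => evenPow (r i)) :=
  (linearIndependent_oddGeomBlock (𝕜 := 𝕜)).sum_type (linearIndependent_evenPow hr) <|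
    (Submodule.disjoint_pi_bot_compl {n : ℕ | Odd n}).symm.mono
      (span_le.2 <| Set.range_subset_iff.2 oddGeomBlock_mem_pi_bot)
      (span_le.2 <| Set.range_subset_iff.2 fun i => evenPow_mem_pi_bot (r i))

lemma span_sumElim_oddGeomBlock_evenPow_le :
    span 𝕜 (Set.range (Sum.elim oddGeomBlock fun i => evenPow (r i))) ≤
      eventuallyZeroAlong blockPoint := by
  refine span_le.2 <| Set.range_subset_iff.2 ?_
  rintro (k | i) <;> rw [SetLike.mem_coe, mem_eventuallyZeroAlong]
  · exact (eventually_cofinite_ne k).mono fun j hj => by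
      simp [oddGeomBlock, oddBlock_blockPoint, hj]
  · exact .of_forall fun j => by
      simp [evenPow, Nat.not_even_iff_odd.mpr (odd_blockPoint j)]

lemma tendsto_oddGeomBlock (k : ℕ) : Tendsto (oddGeomBlock k : ℕ → 𝕜) atTop (nhds 0) :=
  squeeze_zero_norm (norm_oddGeomBlock_le k)
    (tendsto_pow_atTop_nhds_zero_of_lt_one (by norm_num) (by norm_num))

lemma tendsto_evenPow {t : 𝕜} (ht : ‖t‖ < 1) : Tendsto (evenPow t) atTop (nhds 0) := by
  refine squeeze_zero_norm (fun n => ?_) ((tendsto_pow_atTop_nhds_zero_of_lt_one (norm_nonneg t)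
    ht).comp (Nat.tendsto_div_const_atTop two_ne_zero))
  unfold evenPow
  split_ifs
  · simp
  · simp only [norm_zero, comp_apply]
    positivity

lemma oddGeom_add_evenPow_ne_zero {t : 𝕜} (ht : t ≠ 0) (n : ℕ) : oddGeom n + evenPow t n ≠ 0 := by
  rcases Nat.even_or_odd n with hn | hn
  · simp [oddGeom, evenPow, hn, Nat.not_odd_iff_even.mpr hn, ht]
  · simp [oddGeom, evenPow, hn, Nat.not_even_iff_odd.mpr hn]

end Construction

theorem stmt15_general {𝕜 : Type} [RCLike 𝕜] (p : ℝ≥0∞) (hp : 0 < p)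
    (F : Submodule 𝕜 (ℕ → 𝕜))
    (hc0 : ∀ x : ℕ → 𝕜, Tendsto x atTop (nhds 0) → x ∈ F)
    (α : Cardinal) (hα₁ : Cardinal.aleph0 ≤ α) (hα₂ : α ≤ Cardinal.continuum) :
    ∃ V : Submodule 𝕜 (ℕ → 𝕜), V ≤ F ∧
      Module.rank 𝕜 ↥V = α ∧
      (∀ x ∈ V, {n : ℕ | x n = 0}.Infinite) ∧
      ¬ ∃ W : Submodule 𝕜 (ℕ → 𝕜), V ≤ W ∧ W ≤ F ∧
          IsClosedInLp p (↑W : Set (ℕ → 𝕜)) ∧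
          Module.rank 𝕜 ↥W = Cardinal.continuum ∧
          ∀ x ∈ W, {n : ℕ | x n = 0}.Infinite := by
  obtain ⟨s, hs⟩ := Cardinal.le_mk_iff_exists_set.mp
    (hα₂.trans_eq (Cardinal.mk_Ioo_real zero_lt_one).symm)
  let r : s → 𝕜 := fun i => ((i : Set.Ioo (0 : ℝ) 1) : ℝ)
  have hr : Injective r :=
    RCLike.ofReal_injective.comp (Subtype.val_injective.comp Subtype.val_injective)
  have hr_norm (i : s) : ‖r i‖ < 1 := by
    simpa [r, abs_of_pos (i : Set.Ioo (0 : ℝ) 1).2.1] using (i : Set.Ioo (0 : ℝ) 1).2.2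
  have hr_ne (i : s) : r i ≠ 0 := by
    simpa [r] using (i : Set.Ioo (0 : ℝ) 1).2.1.ne'
  let w := Sum.elim oddGeomBlock fun i => evenPow (r i)
  have hw : LinearIndependent 𝕜 w := linearIndependent_sumElim_oddGeomBlock_evenPow hr
  refine ⟨span 𝕜 (Set.range w), span_le.2 ?_, ?_, fun x hx => ?_, ?_⟩
  · rintro _ ⟨k | i, rfl⟩
    exacts [hc0 _ (tendsto_oddGeomBlock k), hc0 _ (tendsto_evenPow (hr_norm i))]
  · rw [rank_span hw, Cardinal.mk_range_eq _ hw.injective,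
      Cardinal.mk_sum, Cardinal.mk_nat, hs, Cardinal.lift_id, Cardinal.lift_id,
      Cardinal.add_eq_right hα₁ hα₁]
  · exact infinite_setOf_eq_zero_of_mem_eventuallyZeroAlong blockPoint_injective
      (span_sumElim_oddGeomBlock_evenPow_le hx)
  · rintro ⟨W, hVW, -, hW, -, hW_zeros⟩
    obtain ⟨i⟩ : Nonempty s := by
      rw [← Cardinal.mk_ne_zero_iff, hs]
      exact (Cardinal.aleph0_pos.trans_le hα₁).ne'
    have h_odd : oddGeom ∈ W :=
      oddGeom_mem_of_isClosedInLp hp hW fun k => hVW (subset_span ⟨.inl k, rfl⟩)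
    have h_sum := W.add_mem h_odd (hVW (subset_span ⟨.inr i, rfl⟩))
    obtain ⟨n, hn⟩ := (hW_zeros _ h_sum).nonempty
    exact oddGeom_add_evenPow_ne_zero (hr_ne i) n hn

/-- Let `p ∈ (0,∞]`, `F` a closed subspace of `ℓ_p`
containing `c₀`, and `α` a cardinal with `ℵ₀ ≤ α ≤ 𝔠`.  Then `F \ Z(F)` is
not `(α, 𝔠)`-spaceable: there is a subspace `V ≤ F` of dimension `α` all of
whose elements have infinitely many zero coordinates such that no closed
subspace `W` satisfies `V ≤ W ≤ F`, `dim W = 𝔠`, and every element of `W` has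
infinitely many zero coordinates. -/
theorem stmt15 {𝕜 : Type} [RCLike 𝕜] (p : ℝ≥0∞) (hp : 0 < p)
    (F : Submodule 𝕜 (ℕ → 𝕜))
    (hFp : (↑F : Set (ℕ → 𝕜)) ⊆ {x | InLp p x})
    (hFc : IsClosedInLp p (↑F : Set (ℕ → 𝕜)))
    (hc0 : ∀ x : ℕ → 𝕜, Tendsto x atTop (nhds 0) → x ∈ F)
    (α : Cardinal) (hα₁ : Cardinal.aleph0 ≤ α) (hα₂ : α ≤ Cardinal.continuum) :
    ∃ V : Submodule 𝕜 (ℕ → 𝕜), V ≤ F ∧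
      Module.rank 𝕜 ↥V = α ∧
      (∀ x ∈ V, {n : ℕ | x n = 0}.Infinite) ∧
      ¬ ∃ W : Submodule 𝕜 (ℕ → 𝕜), V ≤ W ∧ W ≤ F ∧
          IsClosedInLp p (↑W : Set (ℕ → 𝕜)) ∧
          Module.rank 𝕜 ↥W = Cardinal.continuum ∧
          ∀ x ∈ W, {n : ℕ | x n = 0}.Infinite :=
  stmt15_general p hp F hc0 α hα₁ hα₂
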